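/- arXiv:2411.16994 — 2 statements merged into one kernel-verified Lean document; each statement's English description precedes it below -/
import Mathlib

section
/- The set Γ = { ¬((p_i ∨ p_{i+1}) > p_i) : i ∈ ℕ } is consistent in C2 (no finite conjunction of its members has a C2-provable negation), yet there is no order model and world at which every member of Γ is true. Hence C2 is not strongly complete with respect to order models. -/
/-- Sentences of the language L: atoms p₀,p₁,…, negation, conjunction, and the
binary conditional `>` (written `cond`). -/
inductive Formula : Type
  | atom : ℕ → Formula
  | neg : Formula → Formula
  | conj : Formula → Formula → Formula
  | cond : Formula → Formula → Formula
  deriving DecidableEq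

namespace Formula

/-- Material implication, defined as usual: p → q := ¬(p ∧ ¬q). -/
def impl (p q : Formula) : Formula := (p.conj q.neg).neg
/-- Disjunction, defined as usual: p ∨ q := ¬(¬p ∧ ¬q). -/
def disj (p q : Formula) : Formula := (p.neg.conj q.neg).neg
/-- Material biconditional, defined as usual. -/
def biimp (p q : Formula) : Formula := (p.impl q).conj (q.impl p)
/-- □p abbreviates ¬p > p. -/
def box (p : Formula) : Formula := p.neg.cond p
/-- ◇p abbreviates ¬□¬p. -/
def dia (p : Formula) : Formula := p.neg.box.neg
/-- ⊥ abbreviates p₀ ∧ ¬p₀. -/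
def bot : Formula := (atom 0).conj (atom 0).neg

end Formula

/-- `p` is a classical propositional tautology (treating conditional formulas and
atoms alike as propositional atoms): every assignment of truth values that respects
¬ and ∧ makes `p` true. -/
def IsTautology (p : Formula) : Prop :=
  ∀ v : Formula → Prop,
    (∀ q, v q.neg ↔ ¬ v q) →
    (∀ q r, v (q.conj r) ↔ v q ∧ v r) →
    v p

/-- Derivability from the axioms of C2 (all classical tautologies, Identity,
Reciprocity, MP, CEM) together with extra axioms `Ax`, closed under Detachment and
Normality; i.e., the smallest extension of C2 containing `Ax` that is closed under
Detachment and Normality. -/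
inductive DerivC2 (Ax : Formula → Prop) : Formula → Prop
  | extra {p : Formula} : Ax p → DerivC2 Ax p
  | taut {p : Formula} : IsTautology p → DerivC2 Ax p
  | id (p : Formula) : DerivC2 Ax (p.cond p)
  | recip (p q r : Formula) :
      DerivC2 Ax (((p.cond q).conj ((q.cond p).conj (p.cond r))).impl (q.cond r))
  | mpAx (p q : Formula) : DerivC2 Ax ((p.cond q).impl (p.impl q))
  | cem (p q : Formula) : DerivC2 Ax ((p.cond q).disj (p.cond q.neg))
  | detach {p q : Formula} : DerivC2 Ax (p.impl q) → DerivC2 Ax p → DerivC2 Ax q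
  | normality {p q r : Formula} (s : Formula) : DerivC2 Ax ((p.conj q).impl r) →
      DerivC2 Ax (((s.cond p).conj (s.cond q)).impl (s.cond r))

/-- Stalnaker's conditional logic C2. -/
def C2 : Formula → Prop := DerivC2 (fun _ => False)

/-- An order frame: a nonempty type of worlds `W` together with, for each world
`w`, a strict well-order `lt w` (writing `lt w x y` for `x <_w y`) of a subset of
`W` (the field of `lt w`: the relation is transitive, well-founded, and connected
on its field), such that `x <_w y` implies `w = x` or `w <_w x`. -/
structure OrderFrame (W : Type) : Type where
  nonempty : Nonempty W
  lt : W → W → W → Prop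
  trans : ∀ w x y z, lt w x y → lt w y z → lt w x z
  wf : ∀ w, WellFounded (lt w)
  connected : ∀ w x y, (∃ z, lt w x z ∨ lt w z x) → (∃ z, lt w y z ∨ lt w z y) →
      x ≠ y → lt w x y ∨ lt w y x
  center : ∀ w x y, lt w x y → x = w ∨ lt w w x

namespace OrderFrame

variable {W : Type}

/-- Accessibility: `v ∈ R(w)` where `R(w) = {w} ∪ {v : w <_w v}`. -/
def acc (F : OrderFrame W) (w v : W) : Prop := v = w ∨ F.lt w w v

/-- `x ≤_w y` iff `x, y ∈ R(w)` and not `y <_w x`. -/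
def wkle (F : OrderFrame W) (w x y : W) : Prop :=
  F.acc w x ∧ F.acc w y ∧ ¬ F.lt w y x

end OrderFrame

/-- Truth at a world of an order model: atoms via the valuation `V`, Booleans
classically, and `p > q` is true at `w` iff either no world in `R(w)` satisfies `p`,
or there is `y ∈ R(w)` satisfying `p ∧ q` such that no `x <_w y` satisfies `p`. -/
def Truth {W : Type} (F : OrderFrame W) (V : ℕ → Set W) : Formula → W → Prop
  | .atom n, w => w ∈ V n
  | .neg p, w => ¬ Truth F V p w
  | .conj p q, w => Truth F V p w ∧ Truth F V q w
  | .cond p q, w =>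
      (∀ v, F.acc w v → ¬ Truth F V p v) ∨
      ∃ y, F.acc w y ∧ Truth F V p y ∧ Truth F V q y ∧
        ∀ x, F.lt w x y → ¬ Truth F V p x

/-- The set Γ = { ¬((p_i ∨ p_{i+1}) > p_i) : i ∈ ℕ }. -/
def Gamma : Set Formula :=
  {f | ∃ i : ℕ, f = (((Formula.atom i).disj (Formula.atom (i + 1))).cond
      (Formula.atom i)).neg}

/-- The conjunction of the non-empty list of sentences `p :: l`. -/
def conjList : Formula → List Formula → Formula
  | p, [] => p
  | p, q :: l => p.conj (conjList q l)

section Aux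

variable {W : Type} (F : OrderFrame W)

lemma acc_of_lt {w x y : W} (h : F.lt w x y) : F.acc w x := F.center w x y h

lemma acc_tri {w a b : W} (ha : F.acc w a) (hb : F.acc w b) :
    a = b ∨ F.lt w a b ∨ F.lt w b a := by
  by_cases hab : a = b
  · exact Or.inl hab
  rcases ha with rfl | ha
  · rcases hb with rfl | hb
    · exact Or.inl rfl
    · exact Or.inr (Or.inl hb)
  · rcases hb with rfl | hb
    · exact Or.inr (Or.inr ha)
    · exact Or.inr (F.connected w a b ⟨w, Or.inr ha⟩ ⟨w, Or.inr hb⟩ hab)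

lemma exists_min {w : W} {P : W → Prop} (h : ∃ v, F.acc w v ∧ P v) :
    ∃ y, F.acc w y ∧ P y ∧ ∀ x, F.lt w x y → ¬ P x := by
  have hne : Set.Nonempty {v | F.acc w v ∧ P v} := h
  refine ⟨(F.wf w).min _ hne, ((F.wf w).min_mem _ hne).1, ((F.wf w).min_mem _ hne).2,
    fun x hx hPx => ?_⟩
  exact (F.wf w).not_lt_min {v | F.acc w v ∧ P v} (x := x) ⟨acc_of_lt F hx, hPx⟩ hx

lemma min_eq {w y1 y2 : W} {P Q : W → Prop} (h1 : F.acc w y1) (h2 : F.acc w y2)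
    (hQ1 : Q y1) (hP2 : P y2)
    (m1 : ∀ x, F.lt w x y1 → ¬ P x) (m2 : ∀ x, F.lt w x y2 → ¬ Q x) : y1 = y2 := by
  rcases acc_tri F h1 h2 with h | h | h
  · exact h
  · exact absurd hQ1 (m2 y1 h)
  · exact absurd hP2 (m1 y2 h)

end Aux

theorem soundness {φ : Formula} (h : C2 φ) :
    ∀ (W : Type) (F : OrderFrame W) (V : ℕ → Set W) (w : W), Truth F V φ w := by
  induction h with
  | extra h => exact h.elim
  | taut h =>
    exact fun W F V w => h (fun q => Truth F V q w) (fun q => Iff.rfl) (fun q r => Iff.rfl)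
  | id p =>
    intro W F V w
    by_cases h : ∃ v, F.acc w v ∧ Truth F V p v
    · obtain ⟨y, hy, hp, hm⟩ := exists_min F h
      exact Or.inr ⟨y, hy, hp, hp, hm⟩
    · exact Or.inl fun v hv hp => h ⟨v, hv, hp⟩
  | recip p q r =>
    intro W F V w
    show ¬ (_ ∧ ¬ _)
    rintro ⟨⟨hpq, hqp, hpr⟩, hn⟩
    apply hn
    rcases hpq with hpq | ⟨y1, a1, hp1, hq1, m1⟩
    · rcases hqp with hqp | ⟨y2, a2, hq2, hp2, m2⟩
      · exact Or.inl hqp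
      · exact absurd hp2 (hpq y2 a2)
    · rcases hqp with hqp | ⟨y2, a2, hq2, hp2, m2⟩
      · exact absurd hq1 (hqp y1 a1)
      rcases hpr with hpr | ⟨y3, a3, hp3, hr3, m3⟩
      · exact absurd hp1 (hpr y1 a1)
      have e12 : y1 = y2 := min_eq F a1 a2 hq1 hp2 m1 m2
      have e13 : y1 = y3 := min_eq F a1 a3 hp1 hp3 m1 m3
      exact Or.inr ⟨y2, a2, hq2, by rw [← e12, e13]; exact hr3, m2⟩
  | mpAx p q =>
    intro W F V w
    show ¬ (_ ∧ ¬ _)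
    rintro ⟨hc, hn⟩
    apply hn
    show ¬ (_ ∧ ¬ _)
    rintro ⟨hp, hnq⟩
    rcases hc with hc | ⟨y, a, hpy, hqy, m⟩
    · exact hc w (Or.inl rfl) hp
    · rcases a with rfl | a
      · exact hnq hqy
      · exact m w a hp
  | cem p q =>
    intro W F V w
    show ¬ (¬ _ ∧ ¬ _)
    rintro ⟨h1, h2⟩
    by_cases hex : ∃ v, F.acc w v ∧ Truth F V p v
    · obtain ⟨y, hy, hp, hm⟩ := exists_min F hex
      by_cases hq : Truth F V q y
      · exact h1 (Or.inr ⟨y, hy, hp, hq, hm⟩)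
      · exact h2 (Or.inr ⟨y, hy, hp, hq, hm⟩)
    · exact h1 (Or.inl fun v hv hp => hex ⟨v, hv, hp⟩)
  | detach hpq hp ih1 ih2 =>
    intro W F V w
    have h1 := ih1 W F V w
    have h2 := ih2 W F V w
    by_contra hq
    exact h1 ⟨h2, hq⟩
  | @normality p q r s hder ih =>
    intro W F V w
    show ¬ (_ ∧ ¬ _)
    rintro ⟨⟨hsp, hsq⟩, hn⟩
    apply hn
    rcases hsp with hsp | ⟨y1, a1, hs1, hp1, m1⟩
    · exact Or.inl hsp
    rcases hsq with hsq | ⟨y2, a2, hs2, hq2, m2⟩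
    · exact absurd hs1 (hsq y1 a1)
    have e : y1 = y2 := min_eq F a1 a2 hs1 hs2 m1 m2
    have hr : Truth F V r y1 := by
      have := ih W F V y1
      by_contra hnr
      exact this ⟨⟨hp1, e ▸ hq2⟩, hnr⟩
    exact Or.inr ⟨y1, a1, hs1, hr, m1⟩

def maxAtom : Formula → ℕ
  | .atom n => n
  | .neg p => maxAtom p
  | .conj p q => max (maxAtom p) (maxAtom q)
  | .cond p q => max (maxAtom p) (maxAtom q)

lemma maxAtom_mem {p : Formula} {l : List Formula} {q : Formula} (h : q ∈ p :: l) :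
    maxAtom q ≤ maxAtom (conjList p l) := by
  induction l generalizing p with
  | nil => obtain rfl := List.mem_singleton.1 h; exact le_rfl
  | cons r l ih =>
    rcases List.mem_cons.1 h with rfl | h
    · exact le_max_of_le_left le_rfl
    · exact le_max_of_le_right (ih (by exact h))

def chainFrame (M : ℕ) : OrderFrame ℕ where
  nonempty := ⟨0⟩
  lt := fun w x y => w = 0 ∧ x < y ∧ y ≤ M
  trans := fun w x y z ⟨h0, h1, _⟩ ⟨_, h2, h3⟩ => ⟨h0, h1.trans h2, h3⟩
  wf := fun w => Subrelation.wf (fun ⟨_, h, _⟩ => h) (Nat.lt_wfRel.wf)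
  connected := by
    rintro w x y ⟨z, hz⟩ ⟨z', hz'⟩ hxy
    have hxM : x ≤ M := by rcases hz with ⟨_, h1, h2⟩ | ⟨_, h1, h2⟩ <;> omega
    have hyM : y ≤ M := by rcases hz' with ⟨_, h1, h2⟩ | ⟨_, h1, h2⟩ <;> omega
    have h0 : w = 0 := by rcases hz with ⟨h, _, _⟩ | ⟨h, _, _⟩ <;> exact h
    rcases Nat.lt_or_ge x y with h | h
    · exact Or.inl ⟨h0, h, hyM⟩
    · exact Or.inr ⟨h0, lt_of_le_of_ne h (fun e => hxy e.symm), hxM⟩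
  center := by
    rintro w x y ⟨h0, h1, h2⟩
    rcases Nat.eq_zero_or_pos x with rfl | hx
    · exact Or.inl h0.symm
    · exact Or.inr ⟨h0, h0 ▸ hx, by omega⟩

lemma gammaTrue (M i : ℕ) (hi : i + 1 ≤ M) :
    Truth (chainFrame M) (fun n => {M - n})
      ((((Formula.atom i).disj (Formula.atom (i + 1))).cond (Formula.atom i)).neg) 0 := by
  have hacc : ∀ v : ℕ, v ≤ M → (chainFrame M).acc 0 v := by
    intro v hv
    rcases Nat.eq_zero_or_pos v with rfl | h
    · exact Or.inl rfl
    · exact Or.inr ⟨rfl, h, hv⟩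
  have hA : ∀ v : ℕ, v = M - i ∨ v = M - (i + 1) →
      Truth (chainFrame M) (fun n => {M - n})
        ((Formula.atom i).disj (Formula.atom (i + 1))) v := by
    rintro v (rfl | rfl)
    · rintro ⟨h1, h2⟩; exact h1 rfl
    · rintro ⟨h1, h2⟩; exact h2 rfl
  show ¬ (_ ∨ _)
  rintro (h | ⟨y, hy, hAy, hpy, hmin⟩)
  · exact h (M - i) (hacc _ (by omega)) (hA _ (Or.inl rfl))
  · have hyv : y = M - i := hpy
    exact hmin (M - (i + 1)) ⟨rfl, by omega, by omega⟩ (hA _ (Or.inr rfl))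

lemma conjList_true {W : Type} (F : OrderFrame W) (V : ℕ → Set W) (w : W)
    (p : Formula) (l : List Formula) (h : ∀ q ∈ p :: l, Truth F V q w) :
    Truth F V (conjList p l) w := by
  induction l generalizing p with
  | nil => exact h p (List.mem_singleton.2 rfl)
  | cons r l ih =>
    exact ⟨h p (List.mem_cons_self),
      ih r (fun q hq => h q (List.mem_cons_of_mem _ hq))⟩


/-- Γ is consistent in C2 (no finite conjunction of its members has a
C2-provable negation, i.e. C2-provably implies ⊥), yet no pointed order model makes
every member of Γ true; hence C2 is not strongly complete with respect to order
models. -/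
theorem gamma_consistent_but_unsatisfiable :
    (∀ (p : Formula) (l : List Formula), p ∈ Gamma → (∀ q ∈ l, q ∈ Gamma) →
      ¬ C2 ((conjList p l).impl Formula.bot)) ∧
    (∀ (W : Type) (F : OrderFrame W) (V : ℕ → Set W) (w : W),
      ∃ f ∈ Gamma, ¬ Truth F V f w) := by
  constructor
  · intro p l hp hl hC2
    set M := maxAtom (conjList p l) with hM
    have htruth := soundness hC2 ℕ (chainFrame M) (fun n => {M - n}) 0
    have hconj : Truth (chainFrame M) (fun n => {M - n}) (conjList p l) 0 := by
      apply conjList_true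
      intro q hq
      have hqG : q ∈ Gamma := by
        rcases List.mem_cons.1 hq with rfl | hq'
        · exact hp
        · exact hl q hq'
      obtain ⟨i, rfl⟩ := hqG
      have hmax : maxAtom ((((Formula.atom i).disj (Formula.atom (i + 1))).cond
          (Formula.atom i)).neg) = i + 1 := by
        simp [maxAtom, Formula.disj]
      have hle : i + 1 ≤ M := hmax ▸ maxAtom_mem hq
      exact gammaTrue M i hle
    have hbot : Truth (chainFrame M) (fun n => {M - n}) Formula.bot 0 := by
      by_contra hb
      exact htruth ⟨hconj, hb⟩
    exact hbot.2 hbot.1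
  · intro W F V w
    by_contra hcon
    push_neg at hcon
    have hG : ∀ i : ℕ, ¬ Truth F V (((Formula.atom i).disj
        (Formula.atom (i + 1))).cond (Formula.atom i)) w :=
      fun i => hcon _ ⟨i, rfl⟩
    have hne : ∀ i : ℕ, ∃ v, F.acc w v ∧
        Truth F V ((Formula.atom i).disj (Formula.atom (i + 1))) v := by
      intro i
      by_contra hc
      push_neg at hc
      exact hG i (Or.inl fun v hv hA => hc v hv hA)
    choose y hy1 hy2 hy3 using fun i => exists_min F (hne i)
    have hnp : ∀ i, ¬ Truth F V (Formula.atom i) (y i) :=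
      fun i hpi => hG i (Or.inr ⟨y i, hy1 i, hy2 i, hpi, hy3 i⟩)
    have hp1 : ∀ i, Truth F V (Formula.atom (i + 1)) (y i) := by
      intro i
      by_contra hc
      exact hy2 i ⟨hnp i, hc⟩
    have hmemS : ∀ i, Truth F V ((Formula.atom (i + 1)).disj
        (Formula.atom (i + 1 + 1))) (y i) := by
      rintro i ⟨h1, _⟩
      exact h1 (hp1 i)
    have desc : ∀ i, F.lt w (y (i + 1)) (y i) := by
      intro i
      rcases acc_tri F (hy1 (i + 1)) (hy1 i) with e | hlt | hlt
      · exact absurd (by rw [e]; exact hp1 i) (hnp (i + 1))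
      · exact hlt
      · exact absurd (hmemS i) (hy3 (i + 1) (y i) hlt)
    have key : ∀ x : W, ¬ ∃ i, y i = x := by
      intro x
      refine (F.wf w).induction (C := fun x => ¬ ∃ i, y i = x) x ?_
      rintro x ih ⟨i, rfl⟩
      exact ih (y (i + 1)) (desc i) ⟨i + 1, rfl⟩
    exact key (y 0) ⟨0, rfl⟩
end

section
/- The schema Cautious Importation, (p > ((p∧q) > r)) → ((p∧q) > r), is valid on an order frame (W,<) if and only if the frame is semi-flat. -/
/-- A frame is semi-flat iff for all w,x,y,z: if x <_w y and (y ≤_w z or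
z ∈ R(x)\R(w)), then y ≤_x z. -/
def SemiFlat {W : Type} (F : OrderFrame W) : Prop :=
  ∀ w x y z, F.lt w x y →
    (F.wkle w y z ∨ (F.acc x z ∧ ¬ F.acc w z)) → F.wkle x y z

/-- The accessibility relation of the frame is transitive. -/
def TransAcc {W : Type} (F : OrderFrame W) : Prop :=
  ∀ w u v, F.acc w u → F.acc u v → F.acc w v

/-- A frame is flat iff it is semi-flat and its accessibility relation is
transitive. -/
def Flat {W : Type} (F : OrderFrame W) : Prop := SemiFlat F ∧ TransAcc F

/-!
Call `y` the first `S`-world of `w` if `y ∈ R(w) ∩ S` and no `S`-world precedes it in `<_w`;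
it exists as soon as `R(w)` meets `S`, and it is unique. Then `p > q` holds at `w` iff `q` holds
at the first `p`-world of `w`, and a frame is semi-flat iff, whenever `x` is the first
`(S ∪ {x})`-world of `w`, the first `S`-world of `w` is also the first `S`-world of `x`. With `S`
the `p ∧ q`-worlds and `x` the first `p`-world, this is exactly what Cautious Importation needs.
Conversely, a failure of semi-flatness at `w, x, y, z` yields such an `S` (`{y, z}`, or `{z}`
when `z ∉ R(x)`), and reading `p, q, r` as `S ∪ {x}`, `S` and the first `S`-worlds of `x`
refutes the schema at `w`.
-/

namespace OrderFrame

variable {W : Type} (F : OrderFrame W)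

lemma lt_irrefl (w a : W) : ¬ F.lt w a a := (F.wf w).irrefl.irrefl a

lemma lt_asymm {w a b : W} (h : F.lt w a b) : ¬ F.lt w b a :=
  fun h' => F.lt_irrefl w a (F.trans w a b a h h')

lemma acc_of_lt_left {w a b : W} (h : F.lt w a b) : F.acc w a :=
  (F.center w a b h).imp id id

lemma acc_of_lt_right {w a b : W} (h : F.lt w a b) : F.acc w b := by
  rcases F.center w a b h with rfl | hwa
  · exact Or.inr h
  · exact Or.inr (F.trans w w a b hwa h)

lemma lt_trichotomy {w a b : W} (ha : F.acc w a) (hb : F.acc w b) :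
    a = b ∨ F.lt w a b ∨ F.lt w b a := by
  by_cases hab : a = b
  · exact Or.inl hab
  rcases ha with rfl | ha <;> rcases hb with rfl | hb
  · exact Or.inl rfl
  · exact Or.inr (Or.inl hb)
  · exact Or.inr (Or.inr ha)
  · exact Or.inr (F.connected w a b ⟨w, Or.inr ha⟩ ⟨w, Or.inr hb⟩ hab)

structure IsFirst (w : W) (S : Set W) (y : W) : Prop where
  acc : F.acc w y
  mem : y ∈ S
  not_mem_of_lt : ∀ x, F.lt w x y → x ∉ S

variable {F}

lemma exists_isFirst {w : W} {S : Set W} (h : ∃ v, F.acc w v ∧ v ∈ S) :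
    ∃ y, F.IsFirst w S y := by
  obtain ⟨y, ⟨hy, hyS⟩, hmin⟩ := (F.wf w).has_min {v | F.acc w v ∧ v ∈ S} h
  exact ⟨y, hy, hyS, fun x hxy hxS => hmin x ⟨F.acc_of_lt_left hxy, hxS⟩ hxy⟩

lemma IsFirst.eq {w y y' : W} {S : Set W} (h : F.IsFirst w S y) (h' : F.IsFirst w S y') :
    y = y' := by
  rcases F.lt_trichotomy h.acc h'.acc with heq | hlt | hlt
  · exact heq
  · exact absurd h.mem (h'.not_mem_of_lt y hlt)
  · exact absurd h'.mem (h.not_mem_of_lt y' hlt)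

lemma IsFirst.mono {w y : W} {S T : Set W} (h : F.IsFirst w S y) (hTS : T ⊆ S) (hy : y ∈ T) :
    F.IsFirst w T y :=
  ⟨h.acc, hy, fun x hxy hxT => h.not_mem_of_lt x hxy (hTS hxT)⟩

lemma isFirst_self {y : W} {S : Set W} (hy : y ∈ S) : F.IsFirst y S y := by
  refine ⟨Or.inl rfl, hy, fun x hxy _ => ?_⟩
  rcases F.center y x y hxy with rfl | hyx
  · exact F.lt_irrefl x x hxy
  · exact F.lt_irrefl y y (F.trans y y x y hyx hxy)

lemma isFirst_of_lt_of_semiFlat (hsf : SemiFlat F) {w x m : W} {S : Set W} (hxm : F.lt w x m)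
    (hm : F.IsFirst w S m) : F.IsFirst x S m := by
  refine ⟨(hsf w x m m hxm (Or.inl ⟨hm.acc, hm.acc, F.lt_irrefl w m⟩)).2.1, hm.mem,
    fun v hvm hvS => ?_⟩
  have hmv : F.wkle w m v ∨ (F.acc x v ∧ ¬ F.acc w v) := by
    by_cases hwv : F.acc w v
    · exact Or.inl ⟨hm.acc, hwv, fun hlt => hm.not_mem_of_lt v hlt hvS⟩
    · exact Or.inr ⟨F.acc_of_lt_left hvm, hwv⟩
  exact (hsf w x m v hxm hmv).2.2 hvm

theorem semiFlat_iff_forall_isFirst : SemiFlat F ↔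
    ∀ w x m (S : Set W), F.IsFirst w (insert x S) x → F.IsFirst w S m → F.IsFirst x S m := by
  constructor
  · intro hsf w x m S hx hm
    rcases F.lt_trichotomy hx.acc hm.acc with rfl | hxm | hmx
    · exact isFirst_self hm.mem
    · exact isFirst_of_lt_of_semiFlat hsf hxm hm
    · exact absurd (Set.mem_insert_of_mem x hm.mem) (hx.not_mem_of_lt m hmx)
  · intro hfirst w x y z hxy H
    have hzy : ¬ F.lt w z y := by
      rcases H with ⟨-, -, hzy⟩ | ⟨-, hwz⟩
      exacts [hzy, fun hzy => hwz (F.acc_of_lt_left hzy)]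
    have hx : F.IsFirst w {x, y, z} x := by
      refine ⟨F.acc_of_lt_left hxy, Or.inl rfl, ?_⟩
      rintro v hvx (rfl | rfl | rfl)
      exacts [F.lt_irrefl w v hvx, F.lt_asymm hxy hvx, hzy (F.trans w v x y hvx hxy)]
    have hy : F.IsFirst w {y, z} y := by
      refine ⟨F.acc_of_lt_right hxy, Or.inl rfl, ?_⟩
      rintro v hvy (rfl | rfl)
      exacts [F.lt_irrefl w v hvy, hzy hvy]
    have hxy' := hfirst w x y {y, z} hx hy
    have hxz : F.acc x z := by
      rcases H with ⟨-, hwz, -⟩ | ⟨hxz, -⟩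
      · have hz : F.IsFirst w {z} z := ⟨hwz, rfl, fun v hvz hv => F.lt_irrefl w v (hv ▸ hvz)⟩
        exact (hfirst w x z {z} (hx.mono (by simp [Set.insert_subset_iff]) (Or.inl rfl)) hz).acc
      · exact hxz
    exact ⟨hxy'.acc, hxz, fun hzy' => hxy'.not_mem_of_lt z hzy' (Or.inr rfl)⟩

end OrderFrame

open OrderFrame

section Semantics

variable {W : Type} {F : OrderFrame W} {V : ℕ → Set W}

lemma truth_impl {p q : Formula} {w : W} :
    Truth F V (p.impl q) w ↔ (Truth F V p w → Truth F V q w) := by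
  simp only [Formula.impl, Truth]
  tauto

lemma truth_cond_iff {p q : Formula} {w : W} :
    Truth F V (p.cond q) w ↔ ∀ y, F.IsFirst w {v | Truth F V p v} y → Truth F V q y := by
  constructor
  · rintro (hnone | ⟨y, hy, hyp, hyq, hymin⟩) y' hy'
    · exact absurd hy'.mem (hnone y' hy'.acc)
    · rwa [← IsFirst.eq ⟨hy, hyp, hymin⟩ hy']
  · intro h
    by_cases hex : ∃ v, F.acc w v ∧ Truth F V p v
    · obtain ⟨y, hy⟩ := exists_isFirst hex
      exact Or.inr ⟨y, hy.acc, hy.mem, h y hy, hy.not_mem_of_lt⟩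
    · exact Or.inl fun v hv hvp => hex ⟨v, hv, hvp⟩

end Semantics

/-- the schema Cautious Importation, (p > ((p∧q) > r)) → ((p∧q) > r),
is valid on an order frame iff the frame is semi-flat. -/
theorem cautious_importation_characterizes_semiflat {W : Type} (F : OrderFrame W) :
    (∀ (V : ℕ → Set W) (w : W) (p q r : Formula),
      Truth F V ((p.cond ((p.conj q).cond r)).impl ((p.conj q).cond r)) w) ↔
    SemiFlat F := by
  rw [semiFlat_iff_forall_isFirst]
  simp only [truth_impl, truth_cond_iff]
  constructor
  · intro hvalid w x m S hx hm
    let V : ℕ → Set W := fun n =>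
      if n = 0 then insert x S else if n = 1 then S else F.IsFirst x S
    have hP : {v | Truth F V (.atom 0) v} = insert x S := rfl
    have hPQ : {v | Truth F V ((Formula.atom 0).conj (.atom 1)) v} = S :=
      Set.ext fun v => and_iff_right_of_imp (Set.mem_insert_of_mem x)
    refine hvalid V w (.atom 0) (.atom 1) (.atom 2) ?_ m (hPQ ▸ hm)
    rw [hP, hPQ]
    rintro y hy m' hm'
    rwa [← hx.eq hy] at hm'
  · intro hfirst V w p q r hX m hm
    obtain ⟨y, hy⟩ := exists_isFirst ⟨m, hm.acc, hm.mem.1⟩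
    refine hX y hy m (hfirst w y m _ ?_ hm)
    exact hy.mono (Set.insert_subset hy.mem fun v hv => hv.1) (Set.mem_insert y _)
end
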